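/- Under assumptions (i)–(iii), suppose additionally that ‖a − b‖ ≤ C0 for all a, b ∈ S, and that the equilibrium Q-function Q_{s*} has action gap δ > 0, i.e. there is π* : X → A with Q_{s*}(x, π*(x)) − Q_{s*}(x, a) ≥ δ for all x ∈ X and all a ≠ π*(x). If the population size N satisfies N > 2 · C_MF / δ, where C_MF = C0 · ((1 − α) L_r + α R_max |X| L_p) / (1 − α)², then for every s' ∈ S such that s̃ := ((N−1)/N) · s* + (1/N) · s' lies in S, the optimal policies of the perturbed and equilibrium problems agree: for every x ∈ X, π*(x) is the unique maximizer of Q_{s̃}(x, ·). -/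

import Mathlib

/-!
The optimal Q-function `Q_s` is the fixed point of the `α`-contraction `T_s`, so by the
standard fixed-point perturbation bound `‖Q_s - Q_{s'}‖∞ ≤ ‖T_s Q_{s'} - T_{s'} Q_{s'}‖∞ / (1 - α)`
it depends Lipschitz-continuously on `s`, with constant `C_MF / C0`. The perturbed parameter `s̃`
lies within `C0 / N` of `s*`, so `Q_{s̃}` is uniformly within `C_MF / N < δ / 2` of `Q_{s*}`,
which is too little to close an action gap of size `δ`.
-/

open Finset

/-- The Bellman optimality operator
`(T Q)(x,a) = r(x,a) + α * Σ_{x'} p(x'|x,a) * max_{a'} Q(x',a')`. -/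
noncomputable def bellmanOp {X A : Type*} [Fintype X] [Fintype A] [Nonempty A]
    (r : X × A → ℝ) (p : X × A → X → ℝ) (α : ℝ) (Q : X × A → ℝ) : X × A → ℝ :=
  fun xa => r xa + α * ∑ x' : X, p xa x' *
    Finset.univ.sup' Finset.univ_nonempty (fun a' : A => Q (x', a'))

open Function

section Bellman

variable {X A : Type*} [Fintype A] [Nonempty A]

noncomputable def maxValue (Q : X × A → ℝ) (x : X) : ℝ :=
  univ.sup' univ_nonempty fun a => Q (x, a)

lemma maxValue_zero : maxValue (0 : X × A → ℝ) = 0 := by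
  ext x
  exact sup'_const _ _

lemma maxValue_le_maxValue_add {Q Q' : X × A → ℝ} {ε : ℝ} (h : ∀ xa, Q xa ≤ Q' xa + ε)
    (x : X) : maxValue Q x ≤ maxValue Q' x + ε :=
  sup'_le _ _ fun a _ =>
    (h (x, a)).trans (by gcongr; exact le_sup' (fun a => Q' (x, a)) (mem_univ a))

variable [Fintype X]

lemma norm_maxValue_sub_le (Q Q' : X × A → ℝ) : ‖maxValue Q - maxValue Q'‖ ≤ ‖Q - Q'‖ := by
  have hQ : ∀ xa, |Q xa - Q' xa| ≤ ‖Q - Q'‖ := fun xa => norm_le_pi_norm (Q - Q') xa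
  refine (pi_norm_le_iff_of_nonneg (norm_nonneg _)).2 fun x => abs_sub_le_iff.2 ⟨?_, ?_⟩ <;>
    exact sub_le_iff_le_add'.2 <|
      maxValue_le_maxValue_add (fun xa => by linarith [abs_le.1 (hQ xa)]) x

lemma norm_maxValue_le (Q : X × A → ℝ) : ‖maxValue Q‖ ≤ ‖Q‖ := by
  simpa [maxValue_zero] using norm_maxValue_sub_le Q 0

lemma abs_sum_mul_le_norm {ι : Type*} [Fintype ι] {p : ι → ℝ} (hp0 : ∀ i, 0 ≤ p i)
    (hp1 : ∑ i, p i = 1) (w : ι → ℝ) : |∑ i, p i * w i| ≤ ‖w‖ :=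
  calc |∑ i, p i * w i| ≤ ∑ i, p i * |w i| := by
        refine (abs_sum_le_sum_abs _ _).trans_eq (sum_congr rfl fun i _ => ?_)
        rw [abs_mul, abs_of_nonneg (hp0 i)]
    _ ≤ ∑ i, p i * ‖w‖ := by gcongr with i; exacts [hp0 i, norm_le_pi_norm w i]
    _ = ‖w‖ := by rw [← sum_mul, hp1, one_mul]

lemma bellmanOp_apply (r : X × A → ℝ) (p : X × A → X → ℝ) (α : ℝ) (Q : X × A → ℝ)
    (xa : X × A) :
    bellmanOp r p α Q xa = r xa + α * ∑ x', p xa x' * maxValue Q x' :=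
  rfl

lemma bellmanOp_zero (r : X × A → ℝ) (p : X × A → X → ℝ) (α : ℝ) : bellmanOp r p α 0 = r := by
  ext xa
  simp [bellmanOp_apply, maxValue_zero]

variable {r : X × A → ℝ} {p : X × A → X → ℝ} {α : ℝ}

lemma norm_bellmanOp_sub_le (hα0 : 0 ≤ α) (hp0 : ∀ xa x', 0 ≤ p xa x')
    (hp1 : ∀ xa, ∑ x', p xa x' = 1) (Q Q' : X × A → ℝ) :
    ‖bellmanOp r p α Q - bellmanOp r p α Q'‖ ≤ α * ‖Q - Q'‖ := by
  refine (pi_norm_le_iff_of_nonneg (by positivity)).2 fun xa => ?_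
  have hdiff : bellmanOp r p α Q xa - bellmanOp r p α Q' xa
      = α * ∑ x', p xa x' * (maxValue Q - maxValue Q') x' := by
    simp only [bellmanOp_apply, Pi.sub_apply, mul_sub, sum_sub_distrib]
    ring
  rw [Pi.sub_apply, hdiff, Real.norm_eq_abs, abs_mul, abs_of_nonneg hα0]
  gcongr
  exact (abs_sum_mul_le_norm (hp0 xa) (hp1 xa) _).trans (norm_maxValue_sub_le Q Q')

lemma bellmanOp_contractingWith (hα0 : 0 ≤ α) (hα1 : α < 1) (hp0 : ∀ xa x', 0 ≤ p xa x')
    (hp1 : ∀ xa, ∑ x', p xa x' = 1) : ContractingWith (⟨α, hα0⟩ : NNReal) (bellmanOp r p α) :=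
  ⟨hα1, LipschitzWith.of_dist_le_mul fun Q Q' => by
    rw [dist_eq_norm, dist_eq_norm]
    exact norm_bellmanOp_sub_le hα0 hp0 hp1 Q Q'⟩

lemma norm_bellmanOp_sub_bellmanOp_le [Nonempty X] (hα0 : 0 ≤ α) {r' : X × A → ℝ}
    {p' : X × A → X → ℝ} {ε : ℝ} (hpp : ∀ xa x', |p xa x' - p' xa x'| ≤ ε) (Q : X × A → ℝ) :
    ‖bellmanOp r p α Q - bellmanOp r' p' α Q‖ ≤ ‖r - r'‖ + α * (Fintype.card X * ε * ‖Q‖) := by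
  have hε : 0 ≤ ε := (abs_nonneg _).trans (hpp (Classical.arbitrary _) (Classical.arbitrary _))
  refine (pi_norm_le_iff_of_nonneg (by positivity)).2 fun xa => ?_
  have hdiff : bellmanOp r p α Q xa - bellmanOp r' p' α Q xa
      = (r - r') xa + α * ∑ x', (p xa x' - p' xa x') * maxValue Q x' := by
    simp only [bellmanOp_apply, Pi.sub_apply, sub_mul, sum_sub_distrib]
    ring
  have htransition : |∑ x', (p xa x' - p' xa x') * maxValue Q x'| ≤ Fintype.card X * ε * ‖Q‖ :=
    calc |∑ x', (p xa x' - p' xa x') * maxValue Q x'|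
        ≤ ∑ x', |p xa x' - p' xa x'| * |maxValue Q x'| := by
          simpa only [abs_mul] using
            abs_sum_le_sum_abs (fun x' => (p xa x' - p' xa x') * maxValue Q x') univ
      _ ≤ ∑ _x' : X, ε * ‖Q‖ := by
          gcongr with x'
          · exact hpp xa x'
          · exact (norm_le_pi_norm (maxValue Q) x').trans (norm_maxValue_le Q)
      _ = Fintype.card X * ε * ‖Q‖ := by simp [mul_assoc]
  rw [Pi.sub_apply, hdiff, Real.norm_eq_abs]
  refine (abs_add_le _ _).trans (add_le_add (norm_le_pi_norm (r - r') xa) ?_)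
  rw [abs_mul, abs_of_nonneg hα0]
  gcongr

lemma norm_le_of_isFixedPt_bellmanOp (hα0 : 0 ≤ α) (hα1 : α < 1) (hp0 : ∀ xa x', 0 ≤ p xa x')
    (hp1 : ∀ xa, ∑ x', p xa x' = 1) {Q : X × A → ℝ} (hQ : IsFixedPt (bellmanOp r p α) Q) :
    ‖Q‖ ≤ ‖r‖ / (1 - α) := by
  have h := (bellmanOp_contractingWith hα0 hα1 hp0 hp1).dist_le_of_fixedPoint 0 hQ
  rw [bellmanOp_zero, dist_zero_left, dist_zero_left] at h
  exact h

lemma norm_sub_le_of_isFixedPt_bellmanOp [Nonempty X] (hα0 : 0 ≤ α) (hα1 : α < 1)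
    (hp0 : ∀ xa x', 0 ≤ p xa x') (hp1 : ∀ xa, ∑ x', p xa x' = 1) {r' : X × A → ℝ}
    {p' : X × A → X → ℝ} {ε : ℝ} (hpp : ∀ xa x', |p xa x' - p' xa x'| ≤ ε) {Q Q' : X × A → ℝ}
    (hQ : IsFixedPt (bellmanOp r p α) Q) (hQ' : IsFixedPt (bellmanOp r' p' α) Q') :
    ‖Q - Q'‖ ≤ (‖r - r'‖ + α * (Fintype.card X * ε * ‖Q'‖)) / (1 - α) := by
  calc ‖Q - Q'‖ = dist Q' Q := by rw [dist_comm, dist_eq_norm]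
    _ ≤ dist Q' (bellmanOp r p α Q') / (1 - α) :=
      (bellmanOp_contractingWith hα0 hα1 hp0 hp1).dist_le_of_fixedPoint Q' hQ
    _ = ‖bellmanOp r p α Q' - bellmanOp r' p' α Q'‖ / (1 - α) := by
      rw [dist_comm, dist_eq_norm]
      nth_rw 2 [← hQ'.eq]
    _ ≤ _ :=
      div_le_div_of_nonneg_right (norm_bellmanOp_sub_bellmanOp_le hα0 hpp Q') (by linarith)

end Bellman

lemma norm_sub_le_of_isFixedPt_bellmanOp_family {X A E : Type*} [Fintype X] [Fintype A]
    [Nonempty X] [Nonempty A] [SeminormedAddCommGroup E] {S : Set E} {α : ℝ} (hα0 : 0 ≤ α) (hα1 : α < 1)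
    {r : E → X × A → ℝ} {p : E → X × A → X → ℝ} {Q : E → X × A → ℝ}
    (hp0 : ∀ s ∈ S, ∀ xa x', 0 ≤ p s xa x') (hp1 : ∀ s ∈ S, ∀ xa, ∑ x', p s xa x' = 1)
    {Rmax : ℝ} (hRmax : 0 ≤ Rmax) (hR : ∀ s ∈ S, ∀ xa, |r s xa| ≤ Rmax)
    {Lr : ℝ} (hLr0 : 0 ≤ Lr) (hLr : ∀ s ∈ S, ∀ s' ∈ S, ∀ xa, |r s xa - r s' xa| ≤ Lr * ‖s - s'‖)
    {Lp : ℝ} (hLp0 : 0 ≤ Lp)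
    (hLp : ∀ s ∈ S, ∀ s' ∈ S, ∀ xa x', |p s xa x' - p s' xa x'| ≤ Lp * ‖s - s'‖)
    (hQ : ∀ s ∈ S, IsFixedPt (bellmanOp (r s) (p s) α) (Q s)) {s s' : E} (hs : s ∈ S)
    (hs' : s' ∈ S) :
    ‖Q s - Q s'‖ ≤
      ((1 - α) * Lr + α * Rmax * Fintype.card X * Lp) / (1 - α) ^ 2 * ‖s - s'‖ := by
  have h1α : 0 < 1 - α := by linarith
  have hr : ‖r s - r s'‖ ≤ Lr * ‖s - s'‖ :=
    (pi_norm_le_iff_of_nonneg (by positivity)).2 (hLr s hs s' hs')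
  have hQs' : ‖Q s'‖ ≤ Rmax / (1 - α) :=
    (norm_le_of_isFixedPt_bellmanOp hα0 hα1 (hp0 s' hs') (hp1 s' hs') (hQ s' hs')).trans <| by
      gcongr
      exact (pi_norm_le_iff_of_nonneg hRmax).2 (hR s' hs')
  calc ‖Q s - Q s'‖
      ≤ (‖r s - r s'‖ + α * (Fintype.card X * (Lp * ‖s - s'‖) * ‖Q s'‖)) / (1 - α) :=
        norm_sub_le_of_isFixedPt_bellmanOp hα0 hα1 (hp0 s hs) (hp1 s hs) (hLp s hs s' hs')
          (hQ s hs) (hQ s' hs')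
    _ ≤ (Lr * ‖s - s'‖ + α * (Fintype.card X * (Lp * ‖s - s'‖) * (Rmax / (1 - α)))) /
          (1 - α) := by
        gcongr
    _ = ((1 - α) * Lr + α * Rmax * Fintype.card X * Lp) / (1 - α) ^ 2 * ‖s - s'‖ := by
        field_simp

lemma norm_mix_sub_left {E : Type*} [SeminormedAddCommGroup E] [NormedSpace ℝ E] {N : ℝ}
    (hN : 0 < N) (a b : E) : ‖((N - 1) / N) • a + (1 / N) • b - a‖ = ‖b - a‖ / N := by
  have h : ((N - 1) / N) • a + (1 / N) • b - a = (1 / N) • (b - a) := by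
    match_scalars
    · field_simp
      ring
    · ring
  rw [h, norm_smul, Real.norm_of_nonneg (by positivity), one_div_mul_eq_div]

theorem perturbed_optimal_policy_agrees_general
    {X A : Type*} [Fintype X] [Fintype A] [Nonempty X] [Nonempty A]
    {E : Type*} [NormedAddCommGroup E] [NormedSpace ℝ E]
    (S : Set E)
    (α : ℝ) (hα0 : 0 ≤ α) (hα1 : α < 1)
    (r : E → X × A → ℝ) (p : E → X × A → X → ℝ)
    (hp0 : ∀ s ∈ S, ∀ xa x', 0 ≤ p s xa x')
    (hp1 : ∀ s ∈ S, ∀ xa, ∑ x' : X, p s xa x' = 1)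
    (Rmax : ℝ) (hRmax : 0 ≤ Rmax)
    (hR : ∀ s ∈ S, ∀ xa : X × A, |r s xa| ≤ Rmax)
    (Lr : ℝ) (hLr0 : 0 ≤ Lr)
    (hLr : ∀ s ∈ S, ∀ s' ∈ S, ∀ xa : X × A, |r s xa - r s' xa| ≤ Lr * ‖s - s'‖)
    (Lp : ℝ) (hLp0 : 0 ≤ Lp)
    (hLp : ∀ s ∈ S, ∀ s' ∈ S, ∀ xa x', |p s xa x' - p s' xa x'| ≤ Lp * ‖s - s'‖)
    (Q : E → X × A → ℝ)
    (hQfix : ∀ s ∈ S, bellmanOp (r s) (p s) α (Q s) = Q s)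
    (C0 : ℝ) (hC0 : ∀ a ∈ S, ∀ b ∈ S, ‖a - b‖ ≤ C0)
    (sstar : E) (hsstar : sstar ∈ S)
    (δ : ℝ) (hδ : 0 < δ) (πstar : X → A)
    (hgap : ∀ x : X, ∀ a : A, a ≠ πstar x → δ ≤ Q sstar (x, πstar x) - Q sstar (x, a))
    (N : ℕ)
    (hN : (N : ℝ) >
      2 * (C0 * ((1 - α) * Lr + α * Rmax * (Fintype.card X) * Lp) / (1 - α) ^ 2) / δ) :
    ∀ s' ∈ S,
      ((((N : ℝ) - 1) / N) • sstar + ((1 : ℝ) / N) • s') ∈ S →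
      ∀ x : X, ∀ a : A, a ≠ πstar x →
        Q ((((N : ℝ) - 1) / N) • sstar + ((1 : ℝ) / N) • s') (x, a) <
          Q ((((N : ℝ) - 1) / N) • sstar + ((1 : ℝ) / N) • s') (x, πstar x) := by
  intro s' hs' hmix x a ha
  set st := (((N : ℝ) - 1) / N) • sstar + ((1 : ℝ) / N) • s'
  set C := ((1 - α) * Lr + α * Rmax * (Fintype.card X) * Lp) / (1 - α) ^ 2
  have hC : 0 ≤ C := by
    have : 0 ≤ 1 - α := by linarith
    positivity
  have hC0' : 0 ≤ C0 := by simpa using hC0 sstar hsstar sstar hsstar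
  have hNδ : 2 * (C0 * C) < N * δ := by rwa [gt_iff_lt, div_lt_iff₀ hδ, mul_div_assoc] at hN
  have hN0 : (0 : ℝ) < N :=
    pos_of_mul_pos_left ((by positivity : 0 ≤ 2 * (C0 * C)).trans_lt hNδ) hδ.le
  have hclose : ∀ xa, |Q st xa - Q sstar xa| < δ / 2 := fun xa =>
    calc |Q st xa - Q sstar xa| ≤ ‖Q st - Q sstar‖ := norm_le_pi_norm (Q st - Q sstar) xa
      _ ≤ C * ‖st - sstar‖ :=
        norm_sub_le_of_isFixedPt_bellmanOp_family hα0 hα1 hp0 hp1 hRmax hR hLr0 hLr hLp0 hLp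
          hQfix hmix hsstar
      _ ≤ C * (C0 / N) := by
        rw [norm_mix_sub_left hN0]
        gcongr
        exact hC0 s' hs' sstar hsstar
      _ < δ / 2 := by
        rw [mul_div_assoc', div_lt_div_iff₀ hN0 two_pos]
        linarith
  have hgap_a := hgap x a ha
  have hclose_a := abs_lt.1 (hclose (x, a))
  have hclose_π := abs_lt.1 (hclose (x, πstar x))
  linarith

/-- Under assumptions (i)–(iii), with diameter of `S` bounded by `C0`,
suppose the equilibrium Q-function `Q_{s*}` has action gap `δ > 0` at `π*`. If the
population size `N` satisfies `N > 2 C_MF / δ`, where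
`C_MF = C0 * ((1 − α) L_r + α R_max |X| L_p) / (1 − α)²`, then for every `s' ∈ S` such
that `s̃ = ((N−1)/N) • s* + (1/N) • s'` lies in `S`, the optimal policies of the perturbed
and equilibrium problems agree: `π*(x)` is the unique maximizer of `Q_{s̃}(x, ·)`. -/
theorem perturbed_optimal_policy_agrees
    {X A : Type*} [Fintype X] [Fintype A] [Nonempty X] [Nonempty A]
    {E : Type*} [NormedAddCommGroup E] [NormedSpace ℝ E]
    (S : Set E) (hS : S.Nonempty)
    (α : ℝ) (hα0 : 0 ≤ α) (hα1 : α < 1)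
    (r : E → X × A → ℝ) (p : E → X × A → X → ℝ)
    (hp0 : ∀ s ∈ S, ∀ xa x', 0 ≤ p s xa x')
    (hp1 : ∀ s ∈ S, ∀ xa, ∑ x' : X, p s xa x' = 1)
    (Rmax : ℝ) (hRmax : 0 ≤ Rmax)
    (hR : ∀ s ∈ S, ∀ xa : X × A, |r s xa| ≤ Rmax)
    (Lr : ℝ) (hLr0 : 0 ≤ Lr)
    (hLr : ∀ s ∈ S, ∀ s' ∈ S, ∀ xa : X × A, |r s xa - r s' xa| ≤ Lr * ‖s - s'‖)
    (Lp : ℝ) (hLp0 : 0 ≤ Lp)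
    (hLp : ∀ s ∈ S, ∀ s' ∈ S, ∀ xa x', |p s xa x' - p s' xa x'| ≤ Lp * ‖s - s'‖)
    (Q : E → X × A → ℝ)
    (hQfix : ∀ s ∈ S, bellmanOp (r s) (p s) α (Q s) = Q s)
    (C0 : ℝ) (hC0 : ∀ a ∈ S, ∀ b ∈ S, ‖a - b‖ ≤ C0)
    (sstar : E) (hsstar : sstar ∈ S)
    (δ : ℝ) (hδ : 0 < δ) (πstar : X → A)
    (hgap : ∀ x : X, ∀ a : A, a ≠ πstar x → δ ≤ Q sstar (x, πstar x) - Q sstar (x, a))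
    (N : ℕ)
    (hN : (N : ℝ) >
      2 * (C0 * ((1 - α) * Lr + α * Rmax * (Fintype.card X) * Lp) / (1 - α) ^ 2) / δ) :
    ∀ s' ∈ S,
      ((((N : ℝ) - 1) / N) • sstar + ((1 : ℝ) / N) • s') ∈ S →
      ∀ x : X, ∀ a : A, a ≠ πstar x →
        Q ((((N : ℝ) - 1) / N) • sstar + ((1 : ℝ) / N) • s') (x, a) <
          Q ((((N : ℝ) - 1) / N) • sstar + ((1 : ℝ) / N) • s') (x, πstar x) :=
  perturbed_optimal_policy_agrees_general S α hα0 hα1 r p hp0 hp1 Rmax hRmax hR Lr hLr0 hLr Lp hLp0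
    hLp Q hQfix C0 hC0 sstar hsstar δ hδ πstar hgap N hN
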